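/- Let H be an irreducible positive analytic system with generating function solution Y and radius of convergence ρ. Then for every a with 0 < a < ρ, the entries of ∂H/∂Y(a,Y(a)) converge absolutely and 0 ≤ Λ_H(a,Y(a)) < 1. -/

import Mathlib

open scoped ENNReal NNReal Topology
open Filter

namespace AnalyticComb

/-- A positive analytic system in dimension `m`: nonnegative real coefficients indexed by
multi-indices in `ℕ^{m+1}`. -/
structure PosSystem (m : ℕ) where
  c : Fin m → (Fin (m + 1) → ℕ) → ℝ
  nonneg : ∀ i d, 0 ≤ c i d

variable {m : ℕ}

/-- The point `(z, Y) ∈ ℝ^{m+1}`. -/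
def vec (z : ℝ) (Y : Fin m → ℝ) : Fin (m + 1) → ℝ := Fin.cons z Y

/-- General term of the series defining `H_i` at `x`. -/
def term (S : PosSystem m) (i : Fin m) (x : Fin (m + 1) → ℝ) (d : Fin (m + 1) → ℕ) : ℝ :=
  S.c i d * ∏ j, x j ^ d j

/-- `x` belongs to the domain of convergence `D(H)`: all `m` series converge absolutely. -/
def ConvAt (S : PosSystem m) (x : Fin (m + 1) → ℝ) : Prop :=
  ∀ i, Summable fun d => |term S i x d|

/-- The value `H(x) ∈ ℝ^m`. -/
noncomputable def Hval (S : PosSystem m) (x : Fin (m + 1) → ℝ) : Fin m → ℝ :=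
  fun i => ∑' d, term S i x d

/-- General term of the termwise-differentiated series `∂H_i/∂Y_j` at `x`. -/
def jacTerm (S : PosSystem m) (i j : Fin m) (x : Fin (m + 1) → ℝ)
    (d : Fin (m + 1) → ℕ) : ℝ :=
  S.c i d * (d j.succ : ℝ) * ∏ k, x k ^ (if k = j.succ then d k - 1 else d k)

/-- Absolute convergence of all entries of the Jacobian `∂H/∂Y` at `x`. -/
def JacConvAt (S : PosSystem m) (x : Fin (m + 1) → ℝ) : Prop :=
  ∀ i j, Summable fun d => |jacTerm S i j x d|

/-- The Jacobian matrix `∂H/∂Y(x)`. -/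
noncomputable def jac (S : PosSystem m) (x : Fin (m + 1) → ℝ) : Matrix (Fin m) (Fin m) ℝ :=
  Matrix.of fun i j => ∑' d, jacTerm S i j x d

/-- Entries of the Jacobian, as sums in `[0,+∞]` (convention `∞·0 = 0`). -/
noncomputable def jacEnn (S : PosSystem m) (x : Fin (m + 1) → ℝ) (i j : Fin m) : ℝ≥0∞ :=
  ∑' d, ENNReal.ofReal (jacTerm S i j x d)

/-- General term of the termwise twice-differentiated series `∂²H_l/∂Y_i∂Y_j` at `x`. -/
def jac2Term (S : PosSystem m) (l i j : Fin m) (x : Fin (m + 1) → ℝ)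
    (d : Fin (m + 1) → ℕ) : ℝ :=
  S.c l d * (d i.succ : ℝ) * ((d j.succ - if i = j then 1 else 0 : ℕ) : ℝ) *
    ∏ k, x k ^ (d k - (if k = i.succ then 1 else 0) - (if k = j.succ then 1 else 0))

/-- The value of `∂²H_l/∂Y_i∂Y_j` at `x`. -/
noncomputable def jac2 (S : PosSystem m) (l i j : Fin m) (x : Fin (m + 1) → ℝ) : ℝ :=
  ∑' d, jac2Term S l i j x d

/-- Spectral radius: largest modulus of a complex eigenvalue of a real matrix. -/
noncomputable def specRad {n : Type*} [Fintype n] [DecidableEq n] (A : Matrix n n ℝ) : ℝ≥0∞ :=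
  spectralRadius ℂ (A.map Complex.ofReal)

/-- `Λ_H(x)`: spectral radius of the Jacobian matrix at `x`. -/
noncomputable def lambda (S : PosSystem m) (x : Fin (m + 1) → ℝ) : ℝ≥0∞ :=
  specRad (jac S x)

/-- The iterates `U^{[k]}` (`U^{[0]} = 0`, `U^{[k+1]} = H(0, U^{[k]})`). -/
noncomputable def uIter (S : PosSystem m) : ℕ → Fin m → ℝ
  | 0 => 0
  | k + 1 => Hval S (vec 0 (uIter S k))

/-- The system is well founded. -/
def IsWF (S : PosSystem m) : Prop :=
  (∀ k ≤ m, ConvAt S (vec 0 (uIter S k))) ∧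
    JacConvAt S (vec 0 (uIter S m)) ∧
    IsNilpotent (jac S (vec 0 (uIter S m)))

/-- The system is linear: no coefficient with total `Y`-degree at least `2`. -/
def IsLinear (S : PosSystem m) : Prop :=
  ∀ i d, 2 ≤ ∑ j : Fin m, d j.succ → S.c i d = 0

/-- `∂H_i/∂Y_j` is not identically zero on `D(H)`. -/
def DependsOn (S : PosSystem m) (i j : Fin m) : Prop :=
  ∃ x : Fin (m + 1) → ℝ, ConvAt S x ∧ (Summable fun d => |jacTerm S i j x d|) ∧
    jac S x i j ≠ 0

/-- For every pair `(i,j)` there is a chain `i = i₀, …, i_k = j`, `k ≥ 1`, of nonvanishing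
partial derivatives. -/
def StronglyConnected (S : PosSystem m) : Prop :=
  ∀ i j : Fin m, ∃ k : ℕ, 1 ≤ k ∧ ∃ p : Fin (k + 1) → Fin m,
    p 0 = i ∧ p (Fin.last k) = j ∧ ∀ t : Fin k, DependsOn S (p t.castSucc) (p t.succ)

/-- Radius of convergence of a real power series given by its coefficients. -/
noncomputable def radius (a : ℕ → ℝ) : ℝ≥0∞ :=
  ⨆ (r : ℝ≥0) (_ : Summable fun n => |a n| * (r : ℝ) ^ n), (r : ℝ≥0∞)

/-- Evaluation of a vector of power series at a real point. -/
noncomputable def eval (y : Fin m → ℕ → ℝ) (x : ℝ) : Fin m → ℝ :=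
  fun i => ∑' n, y i n * x ^ n

/-- Convergence of all the coordinate power series at `x`. -/
def EvalConv (y : Fin m → ℕ → ℝ) (x : ℝ) : Prop :=
  ∀ i, Summable fun n => y i n * x ^ n

/-- A generating function solution of a (well-founded) system. -/
structure GFSol (S : PosSystem m) where
  y : Fin m → ℕ → ℝ
  nonneg : ∀ i n, 0 ≤ y i n
  rad_pos : 0 < ⨅ i, radius (y i)
  init : eval y 0 = uIter S m
  conv : ∀ x : ℝ, 0 ≤ x → ENNReal.ofReal x < ⨅ i, radius (y i) →
    ConvAt S (vec x (eval y x))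
  fixed : ∀ x : ℝ, 0 ≤ x → ENNReal.ofReal x < ⨅ i, radius (y i) →
    eval y x = Hval S (vec x (eval y x))

/-- The radius of convergence `ρ` of the solution. -/
noncomputable def GFSol.rad {S : PosSystem m} (sol : GFSol S) : ℝ≥0∞ :=
  ⨅ i, radius (sol.y i)

/-- The system is zero-free: no coordinate of the solution is the zero power series. -/
def GFSol.ZeroFree {S : PosSystem m} (sol : GFSol S) : Prop :=
  ∀ i, ∃ n, sol.y i n ≠ 0

/-- The system is irreducible. -/
def GFSol.Irreducible {S : PosSystem m} (sol : GFSol S) : Prop :=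
  IsWF S ∧ sol.ZeroFree ∧ StronglyConnected S

/-- `τ_i = lim_{x→ρ⁻} Y_i(x) ∈ [0,+∞]`, as a monotone supremum. -/
noncomputable def GFSol.tau {S : PosSystem m} (sol : GFSol S) (i : Fin m) : ℝ≥0∞ :=
  ⨆ (x : ℝ) (_ : 0 ≤ x) (_ : ENNReal.ofReal x < sol.rad), ENNReal.ofReal (eval sol.y x i)

/-- The Newton iterates at `a`. -/
noncomputable def newton (S : PosSystem m) (a : ℝ) : ℕ → Fin m → ℝ
  | 0 => 0
  | n + 1 =>
      newton S a n +
        ((1 - jac S (vec a (newton S a n)))⁻¹).mulVec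
          (Hval S (vec a (newton S a n)) - newton S a n)

/-- The Newton step at `y^{[k]}` is legitimate, so that `y^{[k+1]}` is defined. -/
def NewtonStepOK (S : PosSystem m) (a : ℝ) (k : ℕ) : Prop :=
  ConvAt S (vec a (newton S a k)) ∧ JacConvAt S (vec a (newton S a k)) ∧
    IsUnit (1 - jac S (vec a (newton S a k))).det

/-- The characteristic map `F(z,Y) = (Y − H(z,Y), det(I − ∂H/∂Y(z,Y)))`. -/
noncomputable def fchar (S : PosSystem m) (x : Fin (m + 1) → ℝ) : Fin (m + 1) → ℝ :=
  Fin.snoc (fun i : Fin m => x i.succ - Hval S x i) ((1 - jac S x).det)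

/-- The Jacobian matrix of the characteristic map. -/
noncomputable def jchar (S : PosSystem m) (x : Fin (m + 1) → ℝ) :
    Matrix (Fin (m + 1)) (Fin (m + 1)) ℝ :=
  Matrix.of fun i j => fderiv ℝ (fchar S) x (Pi.single j (1 : ℝ)) i

/-- The map `F(z,Y) = (Y − H(z,Y), Y₁ − 1)`. -/
noncomputable def fone (S : PosSystem m) (x : Fin (m + 1) → ℝ) : Fin (m + 1) → ℝ :=
  Fin.snoc (fun i : Fin m => x i.succ - Hval S x i) (x 1 - 1)

/-- The Jacobian matrix of `fone`. -/
noncomputable def jone (S : PosSystem m) (x : Fin (m + 1) → ℝ) :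
    Matrix (Fin (m + 1)) (Fin (m + 1)) ℝ :=
  Matrix.of fun i j => fderiv ℝ (fone S) x (Pi.single j (1 : ℝ)) i

/-- Term of the Jacobian entries at a complex point. -/
def jacTermC (S : PosSystem m) (i j : Fin m) (x : Fin (m + 1) → ℂ)
    (d : Fin (m + 1) → ℕ) : ℂ :=
  (S.c i d : ℂ) * (d j.succ : ℂ) * ∏ k, x k ^ (if k = j.succ then d k - 1 else d k)

/-- The Jacobian matrix at a complex point. -/
noncomputable def jacC (S : PosSystem m) (x : Fin (m + 1) → ℂ) : Matrix (Fin m) (Fin m) ℂ :=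
  Matrix.of fun i j => ∑' d, jacTermC S i j x d

/-- Evaluation of the solution at a complex point. -/
noncomputable def evalC (y : Fin m → ℕ → ℝ) (w : ℂ) : Fin m → ℂ :=
  fun i => ∑' n, (y i n : ℂ) * w ^ n

/-- `α` (on the circle `|w| = ρ`) is a singularity of the solution: some coordinate admits
no analytic continuation to a neighborhood of `α`. -/
def IsSingularity {S : PosSystem m} (sol : GFSol S) (ρ : ℝ) (α : ℂ) : Prop :=
  ∃ i : Fin m, ¬ ∃ (U : Set ℂ) (g : ℂ → ℂ), IsOpen U ∧ α ∈ U ∧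
    (∀ w ∈ U, AnalyticAt ℂ g w) ∧ ∀ w ∈ U ∩ Metric.ball (0 : ℂ) ρ, g w = evalC sol.y w i

/-- `q` is the period of the power series with coefficient sequence `a`: the differences of
elements of the support generate the subgroup `qℤ` of `ℤ`. -/
def HasPeriod (a : ℕ → ℝ) (q : ℕ) : Prop :=
  (∀ n n' : ℕ, a n ≠ 0 → a n' ≠ 0 → (q : ℤ) ∣ (n : ℤ) - (n' : ℤ)) ∧
    ∀ q' : ℕ, (∀ n n' : ℕ, a n ≠ 0 → a n' ≠ 0 → (q' : ℤ) ∣ (n : ℤ) - (n' : ℤ)) → q' ∣ q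

/-- Valuation: index of the first nonzero coefficient. -/
noncomputable def sVal (a : ℕ → ℝ) : ℕ := sInf {n | a n ≠ 0}



section aux
variable {ι : Type*} [DecidableEq ι]

lemma pow_sub_pow_ge (n : ℕ) {u v : ℝ} (h0 : 0 ≤ u) (huv : u ≤ v) :
    u ^ n + n * u ^ (n - 1) * (v - u) ≤ v ^ n := by
  rcases Nat.eq_zero_or_pos n with hn | hn
  · subst hn; simp
  have key := geom_sum₂_mul v u n
  have hsum : (n : ℝ) * u ^ (n - 1) ≤ ∑ i ∈ Finset.range n, v ^ i * u ^ (n - 1 - i) := by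
    calc (n : ℝ) * u ^ (n - 1) = ∑ _i ∈ Finset.range n, u ^ (n - 1) := by
          rw [Finset.sum_const, Finset.card_range, nsmul_eq_mul]
      _ ≤ _ := by
          refine Finset.sum_le_sum fun i hi => ?_
          have hi' : i + (n - 1 - i) = n - 1 := by
            have := Finset.mem_range.mp hi; omega
          calc u ^ (n - 1) = u ^ i * u ^ (n - 1 - i) := by rw [← pow_add, hi']
            _ ≤ v ^ i * u ^ (n - 1 - i) := by
                apply mul_le_mul_of_nonneg_right (pow_le_pow_left₀ h0 huv i)
                  (pow_nonneg h0 _)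
  have h2 : (n : ℝ) * u ^ (n - 1) * (v - u) ≤
      (∑ i ∈ Finset.range n, v ^ i * u ^ (n - 1 - i)) * (v - u) :=
    mul_le_mul_of_nonneg_right hsum (by linarith)
  rw [key] at h2; linarith

lemma pow_sub_pow_gt {n : ℕ} (hn : 2 ≤ n) {u v : ℝ} (h0 : 0 < u) (huv : u < v) :
    u ^ n + n * u ^ (n - 1) * (v - u) < v ^ n := by
  have key := geom_sum₂_mul v u n
  have hsum : (n : ℝ) * u ^ (n - 1) < ∑ i ∈ Finset.range n, v ^ i * u ^ (n - 1 - i) := by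
    calc (n : ℝ) * u ^ (n - 1) = ∑ _i ∈ Finset.range n, u ^ (n - 1) := by
          rw [Finset.sum_const, Finset.card_range, nsmul_eq_mul]
      _ < _ := by
          refine Finset.sum_lt_sum (fun i hi => ?_) ⟨1, Finset.mem_range.mpr (by omega), ?_⟩
          · have hi' : i + (n - 1 - i) = n - 1 := by
              have := Finset.mem_range.mp hi; omega
            calc u ^ (n - 1) = u ^ i * u ^ (n - 1 - i) := by rw [← pow_add, hi']
              _ ≤ v ^ i * u ^ (n - 1 - i) := by
                  apply mul_le_mul_of_nonneg_right (pow_le_pow_left₀ h0.le huv.le i)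
                    (pow_nonneg h0.le _)
          · have h1 : 1 + (n - 1 - 1) = n - 1 := by omega
            calc u ^ (n - 1) = u ^ 1 * u ^ (n - 1 - 1) := by rw [← pow_add, h1]
              _ < v ^ 1 * u ^ (n - 1 - 1) := by
                  apply mul_lt_mul_of_pos_right _ (pow_pos h0 _)
                  simpa using huv
  have h2 : (n : ℝ) * u ^ (n - 1) * (v - u) <
      (∑ i ∈ Finset.range n, v ^ i * u ^ (n - 1 - i)) * (v - u) :=
    mul_lt_mul_of_pos_right hsum (by linarith)
  rw [key] at h2; linarith

lemma prod_lb (s : Finset ι) (U V D : ι → ℝ) (hU : ∀ i ∈ s, 0 ≤ U i)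
    (hD : ∀ i ∈ s, 0 ≤ D i) (hDV : ∀ i ∈ s, U i + D i ≤ V i) :
    ∏ i ∈ s, U i + ∑ k ∈ s, D k * ∏ l ∈ s.erase k, U l ≤ ∏ i ∈ s, V i := by
  induction s using Finset.induction_on with
  | empty => simp
  | @insert a s ha IH =>
    have hUa := hU a (Finset.mem_insert_self a s)
    have hDa := hD a (Finset.mem_insert_self a s)
    have hVa := hDV a (Finset.mem_insert_self a s)
    have hU' : ∀ i ∈ s, 0 ≤ U i := fun i hi => hU i (Finset.mem_insert_of_mem hi)
    have hD' : ∀ i ∈ s, 0 ≤ D i := fun i hi => hD i (Finset.mem_insert_of_mem hi)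
    have hDV' : ∀ i ∈ s, U i + D i ≤ V i := fun i hi => hDV i (Finset.mem_insert_of_mem hi)
    have IH' := IH hU' hD' hDV'
    have hP : (0:ℝ) ≤ ∏ i ∈ s, U i := Finset.prod_nonneg hU'
    have hQ : (0:ℝ) ≤ ∑ k ∈ s, D k * ∏ l ∈ s.erase k, U l := by
      refine Finset.sum_nonneg fun k hk => mul_nonneg (hD' k hk) (Finset.prod_nonneg ?_)
      exact fun l hl => hU' l (Finset.mem_of_mem_erase hl)
    have expand : ∏ i ∈ insert a s, U i + ∑ k ∈ insert a s, D k * ∏ l ∈ (insert a s).erase k, U l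
        = U a * ∏ i ∈ s, U i + (D a * ∏ i ∈ s, U i
          + U a * ∑ k ∈ s, D k * ∏ l ∈ s.erase k, U l) := by
      rw [Finset.prod_insert ha, Finset.sum_insert ha, Finset.erase_insert ha, Finset.mul_sum]
      have : ∀ k ∈ s, D k * ∏ l ∈ (insert a s).erase k, U l
          = U a * (D k * ∏ l ∈ s.erase k, U l) := by
        intro k hk
        have hka : a ≠ k := fun h => ha (h ▸ hk)
        rw [Finset.erase_insert_of_ne hka, Finset.prod_insert (fun h => ha (Finset.mem_of_mem_erase h))]
        ring
      rw [Finset.sum_congr rfl this]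
    rw [expand, Finset.prod_insert ha]
    have hmul : (U a + D a) * (∏ i ∈ s, U i + ∑ k ∈ s, D k * ∏ l ∈ s.erase k, U l)
        ≤ V a * ∏ i ∈ s, V i := by
      apply mul_le_mul hVa IH' (by linarith) (by linarith)
    nlinarith [mul_nonneg hDa hQ]

lemma prod_lb1 (s : Finset ι) (U V D : ι → ℝ) (hU : ∀ i ∈ s, 0 < U i)
    (hD : ∀ i ∈ s, 0 ≤ D i) (hDV : ∀ i ∈ s, U i + D i ≤ V i)
    {k0 : ι} (hk0 : k0 ∈ s) (hstrict : U k0 + D k0 < V k0) :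
    ∏ i ∈ s, U i + ∑ k ∈ s, D k * ∏ l ∈ s.erase k, U l < ∏ i ∈ s, V i := by
  set s' := s.erase k0 with hs'
  have hU' : ∀ i ∈ s', 0 ≤ U i := fun i hi => (hU i (Finset.mem_of_mem_erase hi)).le
  have hD' : ∀ i ∈ s', 0 ≤ D i := fun i hi => hD i (Finset.mem_of_mem_erase hi)
  have hDV' : ∀ i ∈ s', U i + D i ≤ V i := fun i hi => hDV i (Finset.mem_of_mem_erase hi)
  have IH := prod_lb s' U V D hU' hD' hDV'
  have hP : (0:ℝ) < ∏ i ∈ s', U i :=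
    Finset.prod_pos fun i hi => hU i (Finset.mem_of_mem_erase hi)
  have hQ : (0:ℝ) ≤ ∑ k ∈ s', D k * ∏ l ∈ s'.erase k, U l := by
    refine Finset.sum_nonneg fun k hk => mul_nonneg (hD' k hk) (Finset.prod_nonneg ?_)
    exact fun l hl => hU' l (Finset.mem_of_mem_erase hl)
  have hUa := (hU k0 hk0).le
  have hDa := hD k0 hk0
  have expand : ∏ i ∈ s, U i + ∑ k ∈ s, D k * ∏ l ∈ s.erase k, U l
      = U k0 * ∏ i ∈ s', U i + (D k0 * ∏ i ∈ s', U i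
        + U k0 * ∑ k ∈ s', D k * ∏ l ∈ s'.erase k, U l) := by
    rw [← Finset.mul_prod_erase s U hk0, ← Finset.add_sum_erase s _ hk0, ← hs', Finset.mul_sum]
    have : ∀ k ∈ s', D k * ∏ l ∈ s.erase k, U l = U k0 * (D k * ∏ l ∈ s'.erase k, U l) := by
      intro k hk
      have hk0k : k0 ∈ s.erase k := by
        refine Finset.mem_erase.mpr ⟨fun h => ?_, hk0⟩
        exact (Finset.mem_erase.mp hk).1 h.symm
      rw [← Finset.mul_prod_erase _ U hk0k, Finset.erase_right_comm, ← hs']; ring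
    rw [Finset.sum_congr rfl this]
  rw [expand, ← Finset.mul_prod_erase s V hk0, ← hs']
  have h1 : U k0 * ∏ i ∈ s', U i + (D k0 * ∏ i ∈ s', U i
        + U k0 * ∑ k ∈ s', D k * ∏ l ∈ s'.erase k, U l)
      ≤ (U k0 + D k0) * (∏ i ∈ s', U i + ∑ k ∈ s', D k * ∏ l ∈ s'.erase k, U l) := by
    nlinarith [mul_nonneg hDa hQ]
  have h2 : (U k0 + D k0) * (∏ i ∈ s', U i + ∑ k ∈ s', D k * ∏ l ∈ s'.erase k, U l)
      < V k0 * (∏ i ∈ s', U i + ∑ k ∈ s', D k * ∏ l ∈ s'.erase k, U l) :=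
    mul_lt_mul_of_pos_right hstrict (by linarith)
  have h3 : V k0 * (∏ i ∈ s', U i + ∑ k ∈ s', D k * ∏ l ∈ s'.erase k, U l)
      ≤ V k0 * ∏ i ∈ s', V i := by
    apply mul_le_mul_of_nonneg_left IH (by linarith)
  linarith

lemma prod_lb2 (s : Finset ι) (U V D : ι → ℝ) (hU : ∀ i ∈ s, 0 ≤ U i)
    (hD : ∀ i ∈ s, 0 ≤ D i) (hDV : ∀ i ∈ s, U i + D i ≤ V i)
    {k1 k2 : ι} (hk1 : k1 ∈ s) (hk2 : k2 ∈ s) (hne : k1 ≠ k2) :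
    ∏ i ∈ s, U i + ∑ k ∈ s, D k * ∏ l ∈ s.erase k, U l
      + D k1 * D k2 * ∏ l ∈ (s.erase k1).erase k2, U l ≤ ∏ i ∈ s, V i := by
  set s' := s.erase k1 with hs'
  have hk2' : k2 ∈ s' := Finset.mem_erase.mpr ⟨fun h => hne h.symm, hk2⟩
  have hU' : ∀ i ∈ s', 0 ≤ U i := fun i hi => hU i (Finset.mem_of_mem_erase hi)
  have hD' : ∀ i ∈ s', 0 ≤ D i := fun i hi => hD i (Finset.mem_of_mem_erase hi)
  have hDV' : ∀ i ∈ s', U i + D i ≤ V i := fun i hi => hDV i (Finset.mem_of_mem_erase hi)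
  have IH := prod_lb s' U V D hU' hD' hDV'
  have hP : (0:ℝ) ≤ ∏ i ∈ s', U i := Finset.prod_nonneg hU'
  have hQ : (0:ℝ) ≤ ∑ k ∈ s', D k * ∏ l ∈ s'.erase k, U l := by
    refine Finset.sum_nonneg fun k hk => mul_nonneg (hD' k hk) (Finset.prod_nonneg ?_)
    exact fun l hl => hU' l (Finset.mem_of_mem_erase hl)
  have hUa := hU k1 hk1
  have hDa := hD k1 hk1
  have expand : ∏ i ∈ s, U i + ∑ k ∈ s, D k * ∏ l ∈ s.erase k, U l
      = U k1 * ∏ i ∈ s', U i + (D k1 * ∏ i ∈ s', U i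
        + U k1 * ∑ k ∈ s', D k * ∏ l ∈ s'.erase k, U l) := by
    rw [← Finset.mul_prod_erase s U hk1, ← Finset.add_sum_erase s _ hk1, ← hs', Finset.mul_sum]
    have : ∀ k ∈ s', D k * ∏ l ∈ s.erase k, U l = U k1 * (D k * ∏ l ∈ s'.erase k, U l) := by
      intro k hk
      have hk1k : k1 ∈ s.erase k := by
        refine Finset.mem_erase.mpr ⟨fun h => ?_, hk1⟩
        exact (Finset.mem_erase.mp hk).1 h.symm
      rw [← Finset.mul_prod_erase _ U hk1k, Finset.erase_right_comm, ← hs']; ring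
    rw [Finset.sum_congr rfl this]
  have hsingle : D k2 * ∏ l ∈ s'.erase k2, U l ≤ ∑ k ∈ s', D k * ∏ l ∈ s'.erase k, U l := by
    refine Finset.single_le_sum (fun k hk => mul_nonneg (hD' k hk) (Finset.prod_nonneg ?_)) hk2'
    exact fun l hl => hU' l (Finset.mem_of_mem_erase hl)
  have h1 : D k1 * (D k2 * ∏ l ∈ s'.erase k2, U l)
      ≤ D k1 * ∑ k ∈ s', D k * ∏ l ∈ s'.erase k, U l :=
    mul_le_mul_of_nonneg_left hsingle hDa
  have h2 : (U k1 + D k1) * (∏ i ∈ s', U i + ∑ k ∈ s', D k * ∏ l ∈ s'.erase k, U l)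
      ≤ V k1 * ∏ i ∈ s', V i :=
    mul_le_mul (hDV k1 hk1) IH (by linarith) (by linarith [hDV k1 hk1])
  rw [expand, ← Finset.mul_prod_erase s V hk1, ← hs']
  nlinarith [mul_nonneg hUa hQ]

end aux

section stage2
variable {m : ℕ}

lemma vec_zero (z : ℝ) (Y : Fin m → ℝ) : vec z Y 0 = z := rfl

lemma vec_succ (z : ℝ) (Y : Fin m → ℝ) (j : Fin m) : vec z Y j.succ = Y j := by
  simp [vec]

lemma vec_nonneg {z : ℝ} {Y : Fin m → ℝ} (hz : 0 ≤ z) (hY : ∀ j, 0 ≤ Y j) :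
    ∀ k, 0 ≤ vec z Y k := fun k => Fin.cases hz hY k

lemma vec_pos {z : ℝ} {Y : Fin m → ℝ} (hz : 0 < z) (hY : ∀ j, 0 < Y j) :
    ∀ k, 0 < vec z Y k := fun k => Fin.cases hz hY k

lemma vec_le {z z' : ℝ} {Y Y' : Fin m → ℝ} (hz : z ≤ z') (hY : ∀ j, Y j ≤ Y' j) :
    ∀ k, vec z Y k ≤ vec z' Y' k := fun k => Fin.cases hz hY k

lemma term_nonneg (S : PosSystem m) (i : Fin m) {x : Fin (m + 1) → ℝ}
    (hx : ∀ k, 0 ≤ x k) (d : Fin (m + 1) → ℕ) : 0 ≤ term S i x d :=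
  mul_nonneg (S.nonneg i d) (Finset.prod_nonneg fun k _ => pow_nonneg (hx k) _)

lemma jacTerm_nonneg (S : PosSystem m) (i j : Fin m) {x : Fin (m + 1) → ℝ}
    (hx : ∀ k, 0 ≤ x k) (d : Fin (m + 1) → ℕ) : 0 ≤ jacTerm S i j x d :=
  mul_nonneg (mul_nonneg (S.nonneg i d) (Nat.cast_nonneg _))
    (Finset.prod_nonneg fun k _ => pow_nonneg (hx k) _)

lemma term_mono (S : PosSystem m) (i : Fin m) {x x' : Fin (m + 1) → ℝ}
    (hx : ∀ k, 0 ≤ x k) (hle : ∀ k, x k ≤ x' k) (d : Fin (m + 1) → ℕ) :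
    term S i x d ≤ term S i x' d := by
  refine mul_le_mul_of_nonneg_left ?_ (S.nonneg i d)
  exact Finset.prod_le_prod (fun k _ => pow_nonneg (hx k) _)
    (fun k _ => pow_le_pow_left₀ (hx k) (hle k) _)

lemma term_pos (S : PosSystem m) (i : Fin m) {x : Fin (m + 1) → ℝ}
    (hx : ∀ k, 0 < x k) {d : Fin (m + 1) → ℕ} (hc : S.c i d ≠ 0) :
    0 < term S i x d :=
  mul_pos (lt_of_le_of_ne (S.nonneg i d) (Ne.symm hc))
    (Finset.prod_pos fun k _ => pow_pos (hx k) _)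

lemma jacTerm_pos (S : PosSystem m) (i j : Fin m) {x : Fin (m + 1) → ℝ}
    (hx : ∀ k, 0 < x k) {d : Fin (m + 1) → ℕ} (hc : S.c i d ≠ 0)
    (hd : 1 ≤ d j.succ) : 0 < jacTerm S i j x d := by
  refine mul_pos (mul_pos (lt_of_le_of_ne (S.nonneg i d) (Ne.symm hc)) ?_)
    (Finset.prod_pos fun k _ => pow_pos (hx k) _)
  exact_mod_cast Nat.lt_of_lt_of_le Nat.zero_lt_one hd

/-- rewriting the jacobian term product -/
lemma jacTerm_prod_eq (S : PosSystem m) (i j : Fin m) (x : Fin (m + 1) → ℝ)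
    (d : Fin (m + 1) → ℕ) :
    jacTerm S i j x d = S.c i d * ((d j.succ : ℝ) * (x j.succ ^ (d j.succ - 1) *
      ∏ l ∈ Finset.univ.erase j.succ, x l ^ d l)) := by
  rw [jacTerm]
  have : ∏ k, x k ^ (if k = j.succ then d k - 1 else d k)
      = x j.succ ^ (d j.succ - 1) * ∏ l ∈ Finset.univ.erase j.succ, x l ^ d l := by
    rw [← Finset.mul_prod_erase Finset.univ _ (Finset.mem_univ j.succ), if_pos rfl]
    congr 1
    refine Finset.prod_congr rfl fun l hl => ?_
    rw [if_neg (Finset.mem_erase.mp hl).1]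
  rw [this]; ring

lemma term_lb (S : PosSystem m) (i : Fin m) {x x' : Fin (m + 1) → ℝ}
    (hx : ∀ k, 0 ≤ x k) (hle : ∀ k, x k ≤ x' k) (d : Fin (m + 1) → ℕ) :
    term S i x d + ∑ j, jacTerm S i j x d * (x' j.succ - x j.succ) ≤ term S i x' d := by
  classical
  set U : Fin (m + 1) → ℝ := fun k => x k ^ d k with hU
  set V : Fin (m + 1) → ℝ := fun k => x' k ^ d k with hV
  set D : Fin (m + 1) → ℝ := fun k => (d k : ℝ) * x k ^ (d k - 1) * (x' k - x k) with hD
  have hUnn : ∀ k ∈ Finset.univ, (0:ℝ) ≤ U k := fun k _ => pow_nonneg (hx k) _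
  have hDnn : ∀ k ∈ Finset.univ, (0:ℝ) ≤ D k := fun k _ =>
    mul_nonneg (mul_nonneg (Nat.cast_nonneg _) (pow_nonneg (hx k) _)) (by linarith [hle k])
  have hDV : ∀ k ∈ Finset.univ, U k + D k ≤ V k := fun k _ =>
    pow_sub_pow_ge (d k) (hx k) (hle k)
  have key := prod_lb Finset.univ U V D hUnn hDnn hDV
  have hsplit : ∑ k, D k * ∏ l ∈ Finset.univ.erase k, U l
      = D 0 * ∏ l ∈ Finset.univ.erase 0, U l
        + ∑ j : Fin m, D j.succ * ∏ l ∈ Finset.univ.erase j.succ, U l :=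
    Fin.sum_univ_succ _
  have hjac : ∀ j : Fin m, jacTerm S i j x d * (x' j.succ - x j.succ)
      = S.c i d * (D j.succ * ∏ l ∈ Finset.univ.erase j.succ, U l) := by
    intro j; rw [jacTerm_prod_eq]; simp only [hD, hU]; ring
  have hD0 : 0 ≤ D 0 * ∏ l ∈ Finset.univ.erase 0, U l :=
    mul_nonneg (hDnn 0 (Finset.mem_univ 0)) (Finset.prod_nonneg fun l hl => hUnn l (Finset.mem_univ l))
  calc term S i x d + ∑ j, jacTerm S i j x d * (x' j.succ - x j.succ)
      = S.c i d * (∏ k, U k + ∑ j : Fin m, D j.succ * ∏ l ∈ Finset.univ.erase j.succ, U l) := by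
        rw [term, Finset.sum_congr rfl fun j _ => hjac j, ← Finset.mul_sum]; ring
    _ ≤ S.c i d * (∏ k, U k + ∑ k, D k * ∏ l ∈ Finset.univ.erase k, U l) := by
        refine mul_le_mul_of_nonneg_left ?_ (S.nonneg i d)
        rw [hsplit]; linarith
    _ ≤ S.c i d * ∏ k, V k := mul_le_mul_of_nonneg_left key (S.nonneg i d)
    _ = term S i x' d := rfl

lemma term_lb_strict (S : PosSystem m) (i : Fin m) {x x' : Fin (m + 1) → ℝ}
    (hx : ∀ k, 0 < x k) (hlt : ∀ k, x k < x' k) {d : Fin (m + 1) → ℕ}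
    (hc : S.c i d ≠ 0) (hdeg : 1 ≤ d 0 ∨ 2 ≤ ∑ j : Fin m, d j.succ) :
    term S i x d + ∑ j, jacTerm S i j x d * (x' j.succ - x j.succ) < term S i x' d := by
  classical
  have hcpos : 0 < S.c i d := lt_of_le_of_ne (S.nonneg i d) (Ne.symm hc)
  set U : Fin (m + 1) → ℝ := fun k => x k ^ d k with hU
  set V : Fin (m + 1) → ℝ := fun k => x' k ^ d k with hV
  set D : Fin (m + 1) → ℝ := fun k => (d k : ℝ) * x k ^ (d k - 1) * (x' k - x k) with hD
  have hUnn : ∀ k ∈ Finset.univ, (0:ℝ) ≤ U k := fun k _ => pow_nonneg (hx k).le _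
  have hUpos : ∀ k ∈ Finset.univ, (0:ℝ) < U k := fun k _ => pow_pos (hx k) _
  have hDnn : ∀ k ∈ Finset.univ, (0:ℝ) ≤ D k := fun k _ =>
    mul_nonneg (mul_nonneg (Nat.cast_nonneg _) (pow_nonneg (hx k).le _)) (by linarith [hlt k])
  have hDV : ∀ k ∈ Finset.univ, U k + D k ≤ V k := fun k _ =>
    pow_sub_pow_ge (d k) (hx k).le (hlt k).le
  have hjac : ∀ j : Fin m, jacTerm S i j x d * (x' j.succ - x j.succ)
      = S.c i d * (D j.succ * ∏ l ∈ Finset.univ.erase j.succ, U l) := by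
    intro j; rw [jacTerm_prod_eq]; simp only [hD, hU]; ring
  have hsplit : ∑ k, D k * ∏ l ∈ Finset.univ.erase k, U l
      = D 0 * ∏ l ∈ Finset.univ.erase 0, U l
        + ∑ j : Fin m, D j.succ * ∏ l ∈ Finset.univ.erase j.succ, U l :=
    Fin.sum_univ_succ _
  have hLHS : term S i x d + ∑ j, jacTerm S i j x d * (x' j.succ - x j.succ)
      = S.c i d * (∏ k, U k + ∑ j : Fin m, D j.succ * ∏ l ∈ Finset.univ.erase j.succ, U l) := by
    rw [term, Finset.sum_congr rfl fun j _ => hjac j, ← Finset.mul_sum]; ring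
  have hRHS : term S i x' d = S.c i d * ∏ k, V k := rfl
  rw [hLHS, hRHS]
  refine mul_lt_mul_of_pos_left ?_ hcpos
  rcases hdeg with hd0 | hdeg2
  · -- the z-term is positive, and we dropped it
    have key := prod_lb Finset.univ U V D hUnn hDnn hDV
    have hpos0 : 0 < D 0 * ∏ l ∈ Finset.univ.erase 0, U l := by
      refine mul_pos ?_ (Finset.prod_pos fun l hl => hUpos l (Finset.mem_univ l))
      refine mul_pos (mul_pos ?_ (pow_pos (hx 0) _)) (by linarith [hlt 0])
      exact_mod_cast Nat.lt_of_lt_of_le Nat.zero_lt_one hd0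
    rw [hsplit] at key; linarith
  · by_cases hsingle : ∃ j : Fin m, 2 ≤ d j.succ
    · obtain ⟨j0, hj0⟩ := hsingle
      have key := prod_lb1 Finset.univ U V D hUpos hDnn hDV (Finset.mem_univ j0.succ)
        (pow_sub_pow_gt hj0 (hx j0.succ) (hlt j0.succ))
      rw [hsplit] at key
      have hD0 : 0 ≤ D 0 * ∏ l ∈ Finset.univ.erase 0, U l :=
        mul_nonneg (hDnn 0 (Finset.mem_univ 0))
          (Finset.prod_nonneg fun l _ => pow_nonneg (hx l).le _)
      linarith
    · push_neg at hsingle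
      -- two distinct coordinates with degree ≥ 1
      obtain ⟨j1, j2, hj1, hj2, hne⟩ :
          ∃ j1 j2 : Fin m, 1 ≤ d j1.succ ∧ 1 ≤ d j2.succ ∧ j1 ≠ j2 := by
        by_contra hcon
        push_neg at hcon
        have hle1 : ∑ j : Fin m, d j.succ ≤ 1 := by
          rcases Classical.em (∃ j1 : Fin m, 1 ≤ d j1.succ) with ⟨j1, hj1⟩ | hno
          · have hz : ∀ j : Fin m, j ≠ j1 → d j.succ = 0 := by
              intro j hj
              by_contra h0
              exact hj (hcon j j1 (by omega) hj1)
            calc ∑ j : Fin m, d j.succ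
                = ∑ j ∈ Finset.univ.erase j1, d j.succ + d j1.succ :=
                  (Finset.sum_erase_add _ _ (Finset.mem_univ j1)).symm
              _ = 0 + d j1.succ := by
                  congr 1
                  exact Finset.sum_eq_zero fun j hj => hz j (Finset.mem_erase.mp hj).1
              _ ≤ 1 := by have := hsingle j1; omega
          · push_neg at hno
            have hz : ∀ j : Fin m, d j.succ = 0 := fun j => by have := hno j; omega
            simp [hz]
        omega
      have hnesucc : j1.succ ≠ j2.succ := fun h => hne (Fin.succ_injective m h)
      have key := prod_lb2 Finset.univ U V D hUnn hDnn hDV (Finset.mem_univ j1.succ)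
        (Finset.mem_univ j2.succ) hnesucc
      rw [hsplit] at key
      have hD0 : 0 ≤ D 0 * ∏ l ∈ Finset.univ.erase 0, U l :=
        mul_nonneg (hDnn 0 (Finset.mem_univ 0))
          (Finset.prod_nonneg fun l _ => pow_nonneg (hx l).le _)
      have hcross : 0 < D j1.succ * D j2.succ *
          ∏ l ∈ (Finset.univ.erase j1.succ).erase j2.succ, U l := by
        have hDpos : ∀ j : Fin m, 1 ≤ d j.succ → 0 < D j.succ := by
          intro j hj
          refine mul_pos (mul_pos ?_ (pow_pos (hx j.succ) _)) (by linarith [hlt j.succ])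
          exact_mod_cast Nat.lt_of_lt_of_le Nat.zero_lt_one hj
        refine mul_pos (mul_pos (hDpos j1 hj1) (hDpos j2 hj2)) (Finset.prod_pos fun l hl => hUpos l (Finset.mem_univ l))
      linarith

end stage2

section stage3
variable {m : ℕ}

lemma summable_of_lt_radius {y : ℕ → ℝ} {x : ℝ} (hx : 0 ≤ x)
    (h : ENNReal.ofReal x < radius y) : Summable fun n => |y n| * x ^ n := by
  rw [radius] at h
  obtain ⟨r, hr⟩ := lt_iSup_iff.mp h
  by_cases hs : Summable fun n => |y n| * (r : ℝ) ^ n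
  · rw [iSup_pos hs] at hr
    have hxr : x ≤ (r : ℝ) := by
      by_contra hxr
      push_neg at hxr
      have h2 : (r : ℝ≥0∞) ≤ ENNReal.ofReal x := by
        rw [← ENNReal.ofReal_coe_nnreal]
        exact ENNReal.ofReal_le_ofReal hxr.le
      exact absurd (lt_of_lt_of_le hr h2) (lt_irrefl _)
    refine Summable.of_nonneg_of_le
      (fun n => mul_nonneg (abs_nonneg _) (pow_nonneg hx n)) (fun n => ?_) hs
    exact mul_le_mul_of_nonneg_left (pow_le_pow_left₀ hx hxr n) (abs_nonneg _)
  · rw [iSup_neg hs] at hr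
    exact absurd hr (by simp)

lemma sol_summable {S : PosSystem m} (sol : GFSol S) {x : ℝ} (hx : 0 ≤ x)
    (h : ENNReal.ofReal x < sol.rad) (i : Fin m) :
    Summable fun n => sol.y i n * x ^ n := by
  rw [GFSol.rad] at h
  have h1 : ENNReal.ofReal x < radius (sol.y i) := lt_of_lt_of_le h (iInf_le _ i)
  refine (summable_of_lt_radius hx h1).congr fun n => ?_
  rw [abs_of_nonneg (sol.nonneg i n)]

lemma eval_nonneg {S : PosSystem m} (sol : GFSol S) {x : ℝ} (hx : 0 ≤ x) (i : Fin m) :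
    0 ≤ eval sol.y x i :=
  tsum_nonneg fun n => mul_nonneg (sol.nonneg i n) (pow_nonneg hx n)

lemma eval_mono {S : PosSystem m} (sol : GFSol S) {x x' : ℝ} (hx : 0 ≤ x) (hxx : x ≤ x')
    (h' : ENNReal.ofReal x' < sol.rad) (i : Fin m) :
    eval sol.y x i ≤ eval sol.y x' i := by
  refine Summable.tsum_le_tsum (fun n => ?_) (sol_summable sol hx ?_ i) (sol_summable sol (hx.trans hxx) h' i)
  · exact mul_le_mul_of_nonneg_left (pow_le_pow_left₀ hx hxx n) (sol.nonneg i n)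
  · exact lt_of_le_of_lt (ENNReal.ofReal_le_ofReal hxx) h'

lemma eval_pos {S : PosSystem m} (sol : GFSol S) {x : ℝ} (hx : 0 < x)
    (h : ENNReal.ofReal x < sol.rad) {i : Fin m} {n : ℕ} (hn : sol.y i n ≠ 0) :
    0 < eval sol.y x i := by
  refine Summable.tsum_pos (sol_summable sol hx.le h i)
    (fun n => mul_nonneg (sol.nonneg i n) (pow_nonneg hx.le n)) n ?_
  exact mul_pos (lt_of_le_of_ne (sol.nonneg i n) (Ne.symm hn)) (pow_pos hx n)

lemma eval_strict_mono {S : PosSystem m} (sol : GFSol S) {x x' : ℝ} (hx : 0 ≤ x)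
    (hxx : x < x') (h' : ENNReal.ofReal x' < sol.rad) {i : Fin m} {n : ℕ}
    (hn1 : 1 ≤ n) (hn : sol.y i n ≠ 0) :
    eval sol.y x i < eval sol.y x' i := by
  refine Summable.tsum_lt_tsum (i := n) (fun k => ?_) ?_
    (sol_summable sol hx (lt_of_le_of_lt (ENNReal.ofReal_le_ofReal hxx.le) h') i)
    (sol_summable sol (hx.trans hxx.le) h' i)
  · exact mul_le_mul_of_nonneg_left (pow_le_pow_left₀ hx hxx.le k) (sol.nonneg i k)
  · refine mul_lt_mul_of_pos_left ?_ (lt_of_le_of_ne (sol.nonneg i n) (Ne.symm hn))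
    exact pow_lt_pow_left₀ hxx hx (by omega)

lemma eval_zero_eq {S : PosSystem m} (sol : GFSol S) (i : Fin m) :
    eval sol.y 0 i = sol.y i 0 := by
  rw [eval, tsum_eq_single 0 (fun n hn => ?_)]
  · simp
  · rw [zero_pow hn, mul_zero]

lemma eval_const_eq {S : PosSystem m} (sol : GFSol S) {i : Fin m}
    (hc : ∀ n, 1 ≤ n → sol.y i n = 0) (x : ℝ) :
    eval sol.y x i = sol.y i 0 := by
  rw [eval, tsum_eq_single 0 (fun n hn => ?_)]
  · simp
  · rw [hc n (by omega), zero_mul]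

lemma exists_between_rad {S : PosSystem m} (sol : GFSol S) {a : ℝ} (ha : 0 ≤ a)
    (h : ENNReal.ofReal a < sol.rad) :
    ∃ b : ℝ, a < b ∧ ENNReal.ofReal b < sol.rad := by
  obtain ⟨r, hr0, har, hrrad⟩ := ENNReal.lt_iff_exists_real_btwn.mp h
  refine ⟨r, ?_, hrrad⟩
  by_contra hra
  push_neg at hra
  exact absurd (lt_of_lt_of_le har (ENNReal.ofReal_le_ofReal hra)) (lt_irrefl _)

lemma jac_apply (S : PosSystem m) (x : Fin (m + 1) → ℝ) (i j : Fin m) :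
    jac S x i j = ∑' d, jacTerm S i j x d := rfl

lemma jac_entry_nonneg (S : PosSystem m) {x : Fin (m + 1) → ℝ} (hx : ∀ k, 0 ≤ x k)
    (i j : Fin m) : 0 ≤ jac S x i j :=
  tsum_nonneg fun d => jacTerm_nonneg S i j hx d

lemma jac_entry_pos (S : PosSystem m) {x : Fin (m + 1) → ℝ} (hx : ∀ k, 0 ≤ x k)
    {i j : Fin m} (hsum : Summable fun d => |jacTerm S i j x d|)
    {d0 : Fin (m + 1) → ℕ} (hterm : 0 < jacTerm S i j x d0) : 0 < jac S x i j := by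
  refine lt_of_lt_of_le hterm (Summable.le_tsum hsum.of_abs d0 fun d _ => jacTerm_nonneg S i j hx d)

lemma dependsOn_witness {S : PosSystem m} {i j : Fin m} (h : DependsOn S i j) :
    ∃ d, S.c i d ≠ 0 ∧ 1 ≤ d j.succ := by
  obtain ⟨x, _, _, hne⟩ := h
  by_contra hall
  push_neg at hall
  apply hne
  have hz : ∀ d, jacTerm S i j x d = 0 := by
    intro d
    by_cases hc : S.c i d = 0
    · simp [jacTerm, hc]
    · have : d j.succ = 0 := by have := hall d hc; omega
      simp [jacTerm, this]
  rw [jac_apply, tsum_congr hz, tsum_zero]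

end stage3

section stage4
variable {m : ℕ}

lemma pow_entry_nonneg {A : Matrix (Fin m) (Fin m) ℝ} (hA : ∀ i j, 0 ≤ A i j) (n : ℕ) :
    ∀ i j, 0 ≤ (A ^ n) i j := by
  induction n with
  | zero =>
    intro i j
    rw [pow_zero]
    by_cases h : i = j <;> simp [Matrix.one_apply, h]
  | succ n IH =>
    intro i j
    rw [pow_succ, Matrix.mul_apply]
    exact Finset.sum_nonneg fun k _ => mul_nonneg (IH i k) (hA k j)

lemma chain_pos {A : Matrix (Fin m) (Fin m) ℝ} (hA : ∀ i j, 0 ≤ A i j) :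
    ∀ (k : ℕ) (p : Fin (k + 1) → Fin m),
      (∀ t : Fin k, 0 < A (p t.castSucc) (p t.succ)) →
      0 < (A ^ k) (p 0) (p (Fin.last k)) := by
  intro k
  induction k with
  | zero =>
    intro p _
    have : (Fin.last 0) = 0 := rfl
    rw [this, pow_zero]
    simp [Matrix.one_apply]
  | succ k IH =>
    intro p hp
    have h1 : 0 < (A ^ k) (p 0) (p (Fin.last k).castSucc) := by
      have hq := IH (fun t => p t.castSucc) (fun t => ?_)
      · have e0 : (0 : Fin (k + 1)).castSucc = (0 : Fin (k + 2)) := rfl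
        simpa [e0] using hq
      · have e1 : (t.castSucc.succ : Fin (k + 2)) = (t.succ).castSucc := by
          ext; simp
        have := hp t.castSucc
        rw [show (t.castSucc : Fin (k+1)).castSucc = (t.castSucc.castSucc : Fin (k+2)) from rfl] at this
        rw [e1] at this
        exact this
    have h2 : 0 < A (p (Fin.last k).castSucc) (p (Fin.last (k + 1))) := by
      have := hp (Fin.last k)
      rwa [Fin.succ_last] at this
    rw [pow_succ, Matrix.mul_apply]
    have hnn : ∀ l ∈ Finset.univ, (0:ℝ) ≤ (A ^ k) (p 0) l * A l (p (Fin.last (k + 1))) :=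
      fun l _ => mul_nonneg (pow_entry_nonneg hA k _ _) (hA _ _)
    refine lt_of_lt_of_le (mul_pos h1 h2) ?_
    exact Finset.single_le_sum hnn (Finset.mem_univ _)

lemma diag_pow_le {B : Matrix (Fin m) (Fin m) ℝ} (hB : ∀ i j, 0 ≤ B i j) (i : Fin m) :
    ∀ M : ℕ, (B i i) ^ M ≤ (B ^ M) i i := by
  intro M
  induction M with
  | zero => simp [Matrix.one_apply]
  | succ M IH =>
    rw [pow_succ, pow_succ, Matrix.mul_apply]
    calc B i i ^ M * B i i ≤ (B ^ M) i i * B i i :=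
          mul_le_mul_of_nonneg_right IH (hB i i)
      _ ≤ ∑ l, (B ^ M) i l * B l i :=
          Finset.single_le_sum (f := fun l => (B ^ M) i l * B l i)
            (fun l _ => mul_nonneg (pow_entry_nonneg hB M _ _) (hB _ _))
            (Finset.mem_univ i)

lemma contra_nilpotent {S : PosSystem m} (hm : 1 ≤ m) {x0 : Fin (m + 1) → ℝ}
    (hnil : IsNilpotent (jac S x0)) (hSC : StronglyConnected S)
    (hnn : ∀ i j : Fin m, 0 ≤ jac S x0 i j)
    (hpos : ∀ i j : Fin m, DependsOn S i j → 0 < jac S x0 i j) : False := by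
  have i : Fin m := ⟨0, hm⟩
  obtain ⟨k, hk1, p, hp0, hpl, hstep⟩ := hSC i i
  have hchain : 0 < (jac S x0 ^ k) i i := by
    have := chain_pos hnn k p (fun t => hpos _ _ (hstep t))
    rwa [hp0, hpl] at this
  obtain ⟨M, hM⟩ := hnil
  have hM1 : 1 ≤ M := by
    by_contra h
    have hM0 : M = 0 := by omega
    subst hM0
    rw [pow_zero] at hM
    have h11 : (1 : Matrix (Fin m) (Fin m) ℝ) i i = (0 : Matrix (Fin m) (Fin m) ℝ) i i := by
      rw [hM]
    simp [Matrix.one_apply] at h11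
  have hle : ((jac S x0 ^ k) i i) ^ M ≤ ((jac S x0 ^ k) ^ M) i i :=
    diag_pow_le (pow_entry_nonneg hnn k) i M
  have hpow0 : ((jac S x0 ^ k) ^ M) = 0 := by
    rw [← pow_mul, mul_comm k M, pow_mul, hM]
    exact zero_pow (by omega)
  rw [hpow0] at hle
  have hpow : 0 < ((jac S x0 ^ k) i i) ^ M := pow_pos hchain M
  simp only [Matrix.zero_apply] at hle
  linarith

end stage4

section stage5
variable {m : ℕ}

lemma tsum_eq_forall_eq {ι : Type*} {f g : ι → ℝ} (hf : Summable f) (hg : Summable g)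
    (hle : ∀ d, f d ≤ g d) (hsum : ∑' d, f d = ∑' d, g d) : ∀ d, f d = g d := by
  intro d
  by_contra hne
  have hlt := Summable.tsum_lt_tsum (i := d) hle (lt_of_le_of_ne (hle d) hne) hf hg
  linarith [hsum, hlt]

lemma term_strict_mono (S : PosSystem m) (i : Fin m) {x x' : Fin (m + 1) → ℝ}
    (hx : ∀ k, 0 < x k) (hle : ∀ k, x k ≤ x' k) {d : Fin (m + 1) → ℕ}
    (hc : S.c i d ≠ 0) (k0 : Fin (m + 1)) (hk0lt : x k0 < x' k0) (hk0d : 1 ≤ d k0) :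
    term S i x d < term S i x' d := by
  refine mul_lt_mul_of_pos_left ?_ (lt_of_le_of_ne (S.nonneg i d) (Ne.symm hc))
  exact Finset.prod_lt_prod (fun k _ => pow_pos (hx k) _)
    (fun k _ => pow_le_pow_left₀ (hx k).le (hle k) _)
    ⟨k0, Finset.mem_univ _, pow_lt_pow_left₀ hk0lt (hx k0).le (by omega)⟩

lemma jacTerm_pos_zcoord (S : PosSystem m) (i j : Fin m) (z : ℝ) {Y : Fin m → ℝ}
    (hY : ∀ l, 0 < Y l) {d : Fin (m + 1) → ℕ} (hc : S.c i d ≠ 0)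
    (hd : 1 ≤ d j.succ) (hd0 : d 0 = 0) : 0 < jacTerm S i j (vec z Y) d := by
  refine mul_pos (mul_pos (lt_of_le_of_ne (S.nonneg i d) (Ne.symm hc)) ?_)
    (Finset.prod_pos fun k _ => ?_)
  · exact_mod_cast Nat.lt_of_lt_of_le Nat.zero_lt_one hd
  · refine Fin.cases ?_ ?_ k
    · rw [if_neg (Ne.symm (Fin.succ_ne_zero j)), vec_zero, hd0, pow_zero]
      exact one_pos
    · intro l
      rw [vec_succ]
      exact pow_pos (hY l) _

/-- In a system that is well-founded, zero-free, strongly connected, if some coordinate of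
the solution is a constant power series, we get a contradiction. -/
lemma const_contra {S : PosSystem m} (hm : 1 ≤ m) (sol : GFSol S) (hirr : sol.Irreducible)
    {a b : ℝ} (ha : 0 < a) (hab : a < b) (hbrad : ENNReal.ofReal b < sol.rad)
    {i0 : Fin m} (hconst : ∀ n, 1 ≤ n → sol.y i0 n = 0) : False := by
  obtain ⟨hWF, hZF, hSC⟩ := hirr
  have harad : ENNReal.ofReal a < sol.rad :=
    lt_of_le_of_lt (ENNReal.ofReal_le_ofReal hab.le) hbrad
  set Ya := eval sol.y a with hYa
  set Yb := eval sol.y b with hYb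
  have hb0 : (0:ℝ) < b := lt_trans ha hab
  have hYapos : ∀ j, 0 < Ya j := fun j => eval_pos sol ha harad (hZF j).choose_spec
  have hYbpos : ∀ j, 0 < Yb j := fun j => eval_pos sol hb0 hbrad (hZF j).choose_spec
  have hYale : ∀ j, Ya j ≤ Yb j := fun j => eval_mono sol ha.le hab.le hbrad j
  have hxpos : ∀ k, 0 < vec a Ya k := vec_pos ha hYapos
  have hxle : ∀ k, vec a Ya k ≤ vec b Yb k := vec_le hab.le hYale
  have hSA : ∀ i, Summable (fun d => term S i (vec a Ya) d) := fun i =>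
    (sol.conv a ha.le harad i).of_abs
  have hSB : ∀ i, Summable (fun d => term S i (vec b Yb) d) := fun i =>
    (sol.conv b hb0.le hbrad i).of_abs
  -- C1: if coordinate i is constant, all its terms are constant between a and b
  have C1 : ∀ i : Fin m, (∀ n, 1 ≤ n → sol.y i n = 0) →
      ∀ d, term S i (vec a Ya) d = term S i (vec b Yb) d := by
    intro i hci
    have h1 : eval sol.y a i = eval sol.y b i := by
      rw [eval_const_eq sol hci a, eval_const_eq sol hci b]
    have h2 : (∑' d, term S i (vec a Ya) d) = ∑' d, term S i (vec b Yb) d := by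
      have ha' := congrFun (sol.fixed a ha.le harad) i
      have hb' := congrFun (sol.fixed b hb0.le hbrad) i
      rw [Hval] at ha' hb'
      rw [← ha', ← hb']
      exact h1
    exact tsum_eq_forall_eq (hSA i) (hSB i)
      (fun d => term_mono S i (fun k => (hxpos k).le) hxle d) h2
  -- C2: a constant coordinate has no z-dependence
  have C2 : ∀ i : Fin m, (∀ n, 1 ≤ n → sol.y i n = 0) →
      ∀ d, S.c i d ≠ 0 → d 0 = 0 := by
    intro i hci d hcd
    by_contra h0
    have hlt := term_strict_mono S i hxpos hxle hcd 0 (by rw [vec_zero, vec_zero]; exact hab)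
      (by omega)
    rw [C1 i hci d] at hlt
    exact lt_irrefl _ hlt
  -- C3/C5: constancy propagates along dependence
  have C5 : ∀ i j : Fin m, (∀ n, 1 ≤ n → sol.y i n = 0) → DependsOn S i j →
      (∀ n, 1 ≤ n → sol.y j n = 0) := by
    intro i j hci hdep
    by_contra hnc
    push_neg at hnc
    obtain ⟨n, hn1, hn⟩ := hnc
    obtain ⟨d, hcd, hdj⟩ := dependsOn_witness hdep
    have hstrict : Ya j < Yb j := eval_strict_mono sol ha.le hab hbrad hn1 hn
    have hlt := term_strict_mono S i hxpos hxle hcd j.succ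
      (by rw [vec_succ, vec_succ]; exact hstrict) hdj
    rw [C1 i hci d] at hlt
    exact lt_irrefl _ hlt
  -- C6: every coordinate is constant
  have C6 : ∀ j : Fin m, ∀ n, 1 ≤ n → sol.y j n = 0 := by
    intro j
    obtain ⟨k, hk1, p, hp0, hpl, hstep⟩ := hSC i0 j
    have key : ∀ t : ℕ, ∀ ht : t < k + 1, ∀ n, 1 ≤ n → sol.y (p ⟨t, ht⟩) n = 0 := by
      intro t
      induction t with
      | zero =>
        intro ht
        have he : (⟨0, ht⟩ : Fin (k + 1)) = 0 := rfl
        rw [he, hp0]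
        exact hconst
      | succ t IH =>
        intro ht
        have ht' : t < k + 1 := by omega
        have htk : t < k := by omega
        have hdep := hstep ⟨t, htk⟩
        have e1 : (⟨t, htk⟩ : Fin k).castSucc = (⟨t, ht'⟩ : Fin (k + 1)) := rfl
        have e2 : (⟨t, htk⟩ : Fin k).succ = (⟨t + 1, ht⟩ : Fin (k + 1)) := rfl
        rw [e1, e2] at hdep
        exact C5 _ _ (IH ht') hdep
    have hk' : k < k + 1 := by omega
    have := key k hk'
    have he : (⟨k, hk'⟩ : Fin (k + 1)) = Fin.last k := rfl
    rwa [he, hpl] at this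
  -- C7: contradiction with nilpotency of the Jacobian at (0, τ)
  set x0 : Fin (m + 1) → ℝ := vec 0 (uIter S m) with hx0
  have hτ : ∀ l, uIter S m l = sol.y l 0 := by
    intro l
    rw [← congrFun sol.init l, eval_zero_eq]
  have hτpos : ∀ l, 0 < uIter S m l := by
    intro l
    obtain ⟨n, hn⟩ := hZF l
    have hn0 : n = 0 := by
      by_contra hne
      exact hn (C6 l n (by omega))
    rw [hτ l]
    exact lt_of_le_of_ne (sol.nonneg l 0) (Ne.symm (hn0 ▸ hn))
  have hnn : ∀ i j : Fin m, 0 ≤ jac S x0 i j := fun i j =>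
    jac_entry_nonneg S (vec_nonneg le_rfl fun l => (hτpos l).le) i j
  have hpos : ∀ i j : Fin m, DependsOn S i j → 0 < jac S x0 i j := by
    intro i j hdep
    obtain ⟨d, hcd, hdj⟩ := dependsOn_witness hdep
    have hd0 : d 0 = 0 := C2 i (C6 i) d hcd
    exact jac_entry_pos S (vec_nonneg le_rfl fun l => (hτpos l).le) (hWF.2.1 i j)
      (jacTerm_pos_zcoord S i j 0 hτpos hcd hdj hd0)
  exact contra_nilpotent hm hWF.2.2 hSC hnn hpos

/-- If every nonzero coefficient is affine and z-free, contradiction. -/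
lemma linear_contra {S : PosSystem m} (hm : 1 ≤ m) (sol : GFSol S) (hirr : sol.Irreducible)
    (hB : ∀ i d, S.c i d ≠ 0 → d 0 = 0 ∧ ∑ j : Fin m, d j.succ ≤ 1) : False := by
  obtain ⟨hWF, hZF, hSC⟩ := hirr
  set x0 : Fin (m + 1) → ℝ := vec 0 (uIter S m) with hx0
  have hτnn : ∀ l, 0 ≤ uIter S m l := by
    intro l
    rw [← congrFun sol.init l, eval_zero_eq]
    exact sol.nonneg l 0
  have hnn : ∀ i j : Fin m, 0 ≤ jac S x0 i j := fun i j =>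
    jac_entry_nonneg S (vec_nonneg le_rfl hτnn) i j
  have hpos : ∀ i j : Fin m, DependsOn S i j → 0 < jac S x0 i j := by
    intro i j hdep
    obtain ⟨d, hcd, hdj⟩ := dependsOn_witness hdep
    obtain ⟨hd0, hdsum⟩ := hB i d hcd
    have hdj1 : d j.succ = 1 := by
      have h1 : d j.succ ≤ ∑ l : Fin m, d l.succ :=
        Finset.single_le_sum (f := fun l : Fin m => d l.succ) (fun l _ => Nat.zero_le _)
          (Finset.mem_univ j)
      omega
    have hother : ∀ l : Fin m, l ≠ j → d l.succ = 0 := by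
      intro l hl
      have hsplit : d j.succ + ∑ x ∈ Finset.univ.erase j, d x.succ = ∑ x : Fin m, d x.succ :=
        Finset.add_sum_erase Finset.univ (fun l : Fin m => d l.succ) (Finset.mem_univ j)
      have hsingle : d l.succ ≤ ∑ x ∈ Finset.univ.erase j, d x.succ :=
        Finset.single_le_sum (f := fun x : Fin m => d x.succ) (fun x _ => Nat.zero_le _)
          (Finset.mem_erase.mpr ⟨hl, Finset.mem_univ l⟩)
      omega
    have hexp : ∀ k : Fin (m + 1), (if k = j.succ then d k - 1 else d k) = 0 := by
      intro k
      refine Fin.cases ?_ ?_ k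
      · rw [if_neg (Ne.symm (Fin.succ_ne_zero j))]; exact hd0
      · intro l
        by_cases hl : l.succ = j.succ
        · rw [if_pos hl]
          have : l = j := Fin.succ_injective m hl
          rw [this, hdj1]
        · rw [if_neg hl]
          exact hother l (fun h => hl (by rw [h]))
    have hterm : 0 < jacTerm S i j x0 d := by
      rw [jacTerm]
      have : ∏ k, x0 k ^ (if k = j.succ then d k - 1 else d k) = 1 := by
        rw [Finset.prod_congr rfl fun k _ => by rw [hexp k, pow_zero]]
        exact Finset.prod_const_one
      rw [this, mul_one]
      refine mul_pos (lt_of_le_of_ne (S.nonneg i d) (Ne.symm hcd)) ?_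
      exact_mod_cast Nat.lt_of_lt_of_le Nat.zero_lt_one (by omega)
    exact jac_entry_pos S (vec_nonneg le_rfl hτnn) (hWF.2.1 i j) hterm
  exact contra_nilpotent hm hWF.2.2 hSC hnn hpos

end stage5

section stage6
variable {m : ℕ}

lemma ratio_le {s t C : ℝ} (hs : 0 ≤ s) (ht : 0 < t) (hb : ∀ k : ℕ, s ^ k ≤ C * t ^ k) :
    s ≤ t := by
  by_contra hlt
  push_neg at hlt
  have h1 : 1 < s / t := (one_lt_div ht).mpr hlt
  obtain ⟨k, hk⟩ := pow_unbounded_of_one_lt C h1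
  have h2 := hb k
  rw [div_pow, lt_div_iff₀ (pow_pos ht k)] at hk
  linarith

lemma sum_mul_mulvec (A B : Matrix (Fin m) (Fin m) ℝ) (h : Fin m → ℝ) (i : Fin m) :
    ∑ j, (A * B) i j * h j = ∑ l, A i l * ∑ j, B l j * h j := by
  calc ∑ j, (A * B) i j * h j = ∑ j, (∑ l, A i l * B l j) * h j := by
        simp [Matrix.mul_apply]
    _ = ∑ j, ∑ l, A i l * B l j * h j := by
        refine Finset.sum_congr rfl fun j _ => Finset.sum_mul _ _ _
    _ = ∑ l, ∑ j, A i l * B l j * h j := Finset.sum_comm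
    _ = ∑ l, A i l * ∑ j, B l j * h j := by
        refine Finset.sum_congr rfl fun l _ => ?_
        rw [Finset.mul_sum]
        exact Finset.sum_congr rfl fun j _ => by ring

lemma sum_pow_zero_mulvec (h : Fin m → ℝ) (i : Fin m) :
    ∑ j, ((1 : Matrix (Fin m) (Fin m) ℝ)) i j * h j = h i := by
  simp [Matrix.one_apply]

lemma contract_of_subinvariant (hm : 1 ≤ m) {J : Matrix (Fin m) (Fin m) ℝ} {h : Fin m → ℝ}
    (hJnn : ∀ i j, 0 ≤ J i j) (hhpos : ∀ i, 0 < h i)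
    (hsub : ∀ i, ∑ j, J i j * h j ≤ h i)
    {i0 : Fin m} (hstrict : ∑ j, J i0 j * h j < h i0)
    (hreach : ∀ i, ∃ k, 1 ≤ k ∧ 0 < (J ^ k) i i0) :
    ∃ (N : ℕ) (θ : ℝ), 1 ≤ N ∧ 0 ≤ θ ∧ θ < 1 ∧
      ∀ (k : ℕ) (i j : Fin m), ((J ^ N) ^ k) i j * h j ≤ θ ^ k * h i := by
  have hne : Nonempty (Fin m) := ⟨⟨0, hm⟩⟩
  have hdec : ∀ (n : ℕ) (i : Fin m),
      (∑ j, (J ^ (n + 1)) i j * h j) ≤ ∑ j, (J ^ n) i j * h j := by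
    intro n i
    rw [pow_succ, sum_mul_mulvec]
    refine Finset.sum_le_sum fun l _ => ?_
    exact mul_le_mul_of_nonneg_left (hsub l) (pow_entry_nonneg hJnn n i l)
  have hante : ∀ i : Fin m, ∀ n n' : ℕ, n ≤ n' →
      (∑ j, (J ^ n') i j * h j) ≤ ∑ j, (J ^ n) i j * h j := by
    intro i n n' hnn'
    induction n' with
    | zero => have : n = 0 := by omega
              subst this; exact le_rfl
    | succ n' IH =>
      rcases Nat.lt_or_ge n (n' + 1) with hlt | hge
      · exact le_trans (hdec n' i) (IH (by omega))
      · have : n = n' + 1 := by omega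
        subst this; exact le_rfl
  have hlh : ∀ (n : ℕ) (i : Fin m), (∑ j, (J ^ n) i j * h j) ≤ h i := by
    intro n i
    have := hante i 0 n (Nat.zero_le n)
    rwa [pow_zero, sum_pow_zero_mulvec] at this
  have key1 : ∀ i : Fin m, ∃ n, 1 ≤ n ∧ (∑ j, (J ^ n) i j * h j) < h i := by
    intro i
    obtain ⟨k, hk1, hkpos⟩ := hreach i
    refine ⟨k + 1, by omega, ?_⟩
    have hrec : (∑ j, (J ^ (k + 1)) i j * h j) = ∑ l, (J ^ k) i l * ∑ j, J l j * h j := by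
      rw [pow_succ, sum_mul_mulvec]
    have hlt : (∑ l, (J ^ k) i l * ∑ j, J l j * h j) < ∑ l, (J ^ k) i l * h l := by
      refine Finset.sum_lt_sum
        (fun l _ => mul_le_mul_of_nonneg_left (hsub l) (pow_entry_nonneg hJnn k i l))
        ⟨i0, Finset.mem_univ i0, mul_lt_mul_of_pos_left hstrict hkpos⟩
    calc (∑ j, (J ^ (k + 1)) i j * h j) = _ := hrec
      _ < ∑ l, (J ^ k) i l * h l := hlt
      _ ≤ h i := hlh k i
  set Nf : Fin m → ℕ := fun i => (key1 i).choose with hNf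
  set N : ℕ := max 1 (Finset.univ.sup Nf) with hN
  have hN1 : 1 ≤ N := le_max_left _ _
  have hgN : ∀ i : Fin m, (∑ j, (J ^ N) i j * h j) < h i := by
    intro i
    obtain ⟨hn1, hnlt⟩ := (key1 i).choose_spec
    refine lt_of_le_of_lt (hante i (Nf i) N ?_) hnlt
    exact le_trans (Finset.le_sup (Finset.mem_univ i)) (le_max_right _ _)
  have hu : (Finset.univ : Finset (Fin m)).Nonempty := Finset.univ_nonempty
  set θ : ℝ := Finset.univ.sup' hu (fun i => (∑ j, (J ^ N) i j * h j) / h i) with hθ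
  have hθ1 : θ < 1 := by
    rw [hθ, Finset.sup'_lt_iff]
    intro i _
    rw [div_lt_one (hhpos i)]
    exact hgN i
  have hgθ : ∀ i, (∑ j, (J ^ N) i j * h j) ≤ θ * h i := by
    intro i
    have := Finset.le_sup' (fun i => (∑ j, (J ^ N) i j * h j) / h i) (Finset.mem_univ i)
    rw [div_le_iff₀ (hhpos i)] at this
    exact le_trans this (by rw [hθ])
  have hθ0 : 0 ≤ θ := by
    obtain ⟨i⟩ := hne
    have h1 : (0:ℝ) ≤ (∑ j, (J ^ N) i j * h j) / h i :=
      div_nonneg (Finset.sum_nonneg fun j _ =>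
        mul_nonneg (pow_entry_nonneg hJnn N i j) (hhpos j).le) (hhpos i).le
    rw [hθ]
    exact le_trans h1 (Finset.le_sup' (f := fun i => (∑ j, (J ^ N) i j * h j) / h i)
      (Finset.mem_univ i))
  have hcontra : ∀ (k : ℕ) (i : Fin m), (∑ j, ((J ^ N) ^ k) i j * h j) ≤ θ ^ k * h i := by
    intro k
    induction k with
    | zero => intro i; rw [pow_zero, sum_pow_zero_mulvec, pow_zero, one_mul]
    | succ k IH =>
      intro i
      have hBnn : ∀ i j, 0 ≤ (J ^ N) i j := pow_entry_nonneg hJnn N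
      calc ∑ j, ((J ^ N) ^ (k + 1)) i j * h j
          = ∑ l, ((J ^ N) ^ k) i l * ∑ j, (J ^ N) l j * h j := by
            rw [pow_succ, sum_mul_mulvec]
        _ ≤ ∑ l, ((J ^ N) ^ k) i l * (θ * h l) := by
            refine Finset.sum_le_sum fun l _ => ?_
            exact mul_le_mul_of_nonneg_left (hgθ l) (pow_entry_nonneg hBnn k i l)
        _ = θ * ∑ l, ((J ^ N) ^ k) i l * h l := by
            rw [Finset.mul_sum]
            exact Finset.sum_congr rfl fun l _ => by ring
        _ ≤ θ * (θ ^ k * h i) := mul_le_mul_of_nonneg_left (IH i) hθ0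
        _ = θ ^ (k + 1) * h i := by ring
  refine ⟨N, θ, hN1, hθ0, hθ1, fun k i j => ?_⟩
  refine le_trans ?_ (hcontra k i)
  refine Finset.single_le_sum (f := fun j => ((J ^ N) ^ k) i j * h j)
    (fun j _ => mul_nonneg (pow_entry_nonneg (pow_entry_nonneg hJnn N) k i j) (hhpos j).le)
    (Finset.mem_univ j)

lemma specRad_lt_one_of_contract {J : Matrix (Fin m) (Fin m) ℝ} {h : Fin m → ℝ}
    (hJnn : ∀ i j, 0 ≤ J i j) (hhpos : ∀ i, 0 < h i)
    {N : ℕ} (hN1 : 1 ≤ N) {θ : ℝ} (hθ0 : 0 ≤ θ) (hθ1 : θ < 1)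
    (hcontr : ∀ (k : ℕ) (i j : Fin m), ((J ^ N) ^ k) i j * h j ≤ θ ^ k * h i) :
    specRad J < 1 := by
  set θ' : ℝ := max θ (1/2) with hθ'
  have hθ'0 : 0 < θ' := lt_of_lt_of_le (by norm_num) (le_max_right _ _)
  have hθ'1 : θ' < 1 := max_lt hθ1 (by norm_num)
  have hθθ' : θ ≤ θ' := le_max_left _ _
  set r : ℝ := θ' ^ ((N : ℝ)⁻¹) with hr
  have hr0 : 0 ≤ r := Real.rpow_nonneg hθ'0.le _
  have hr1 : r < 1 := Real.rpow_lt_one hθ'0.le hθ'1 (by positivity)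
  have hrN : r ^ N = θ' := by
    rw [hr, ← Real.rpow_natCast (θ' ^ ((N : ℝ)⁻¹)) N, ← Real.rpow_mul hθ'0.le,
      inv_mul_cancel₀ (Nat.cast_ne_zero.mpr (by omega : N ≠ 0)),
      Real.rpow_one]
  have habs : ∀ μ : ℂ, μ ∈ spectrum ℂ (J.map Complex.ofReal) → ‖μ‖ ≤ r := by
    intro μ hμ
    set M : Matrix (Fin m) (Fin m) ℂ := J.map Complex.ofReal with hM
    have hnu : ¬IsUnit ((algebraMap ℂ (Matrix (Fin m) (Fin m) ℂ)) μ - M) :=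
      spectrum.mem_iff.mp hμ
    have hdet : ((algebraMap ℂ (Matrix (Fin m) (Fin m) ℂ)) μ - M).det = 0 := by
      by_contra hd
      exact hnu ((Matrix.isUnit_iff_isUnit_det _).mpr (isUnit_iff_ne_zero.mpr hd))
    obtain ⟨v, hv0, hveq⟩ := Matrix.exists_mulVec_eq_zero_iff.mpr hdet
    rw [Algebra.algebraMap_eq_smul_one, Matrix.sub_mulVec, Matrix.smul_mulVec,
      Matrix.one_mulVec, sub_eq_zero] at hveq
    have heig : M.mulVec v = μ • v := hveq.symm
    have hpow : ∀ n : ℕ, (M ^ n).mulVec v = μ ^ n • v := by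
      intro n
      induction n with
      | zero => rw [pow_zero, Matrix.one_mulVec, pow_zero, one_smul]
      | succ n IH =>
        rw [pow_succ, ← Matrix.mulVec_mulVec, heig, Matrix.mulVec_smul, IH, smul_smul,
          ← pow_succ']
    have hmap : ∀ n : ℕ, (M ^ n) = (J ^ n).map Complex.ofReal := by
      intro n
      have h1 : M = (Complex.ofRealHom.mapMatrix) J := rfl
      rw [h1, ← map_pow, RingHom.mapMatrix_apply]
      rfl
    obtain ⟨i1, hi1⟩ := Function.ne_iff.mp hv0
    have hvi1 : (0:ℝ) < ‖v i1‖ := norm_pos_iff.mpr hi1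
    set C0 : ℝ := ∑ j, (h i1 / h j) * ‖v j‖ with hC0
    have hC00 : 0 ≤ C0 :=
      Finset.sum_nonneg fun j _ => mul_nonneg
        (div_nonneg (hhpos i1).le (hhpos j).le) (norm_nonneg _)
    set C : ℝ := C0 / ‖v i1‖ with hC
    have hC0' : 0 ≤ C := div_nonneg hC00 hvi1.le
    have hkey : ∀ k : ℕ, ‖μ‖ ^ (N * k) ≤ C * θ ^ k := by
      intro k
      have h1 : ((M ^ (N * k)).mulVec v) i1 = μ ^ (N * k) * v i1 := by
        rw [hpow]; simp
      have h2 : ((M ^ (N * k)).mulVec v) i1 = ∑ j, ((J ^ (N * k)) i1 j : ℂ) * v j := by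
        rw [hmap]
        simp [Matrix.mulVec, dotProduct, Matrix.map_apply]
      have h3 : ‖∑ j, ((J ^ (N * k)) i1 j : ℂ) * v j‖
          ≤ ∑ j, (J ^ (N * k)) i1 j * ‖v j‖ := by
        refine le_trans (norm_sum_le _ _) (Finset.sum_le_sum fun j _ => ?_)
        rw [norm_mul, Complex.norm_real, Real.norm_eq_abs,
          abs_of_nonneg (pow_entry_nonneg hJnn (N * k) i1 j)]
      have h4 : (∑ j, (J ^ (N * k)) i1 j * ‖v j‖)
          ≤ ∑ j, (θ ^ k * h i1 / h j) * ‖v j‖ := by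
        refine Finset.sum_le_sum fun j _ => ?_
        refine mul_le_mul_of_nonneg_right ?_ (norm_nonneg _)
        rw [le_div_iff₀ (hhpos j)]
        have := hcontr k i1 j
        rwa [← pow_mul] at this
      have h5 : (∑ j, (θ ^ k * h i1 / h j) * ‖v j‖) = θ ^ k * C0 := by
        rw [hC0, Finset.mul_sum]
        exact Finset.sum_congr rfl fun j _ => by ring
      have h6 : ‖μ‖ ^ (N * k) * ‖v i1‖ ≤ θ ^ k * C0 := by
        calc ‖μ‖ ^ (N * k) * ‖v i1‖ = ‖μ ^ (N * k) * v i1‖ := by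
              rw [norm_mul, norm_pow]
          _ = ‖((M ^ (N * k)).mulVec v) i1‖ := by rw [h1]
          _ = ‖∑ j, ((J ^ (N * k)) i1 j : ℂ) * v j‖ := by rw [h2]
          _ ≤ ∑ j, (J ^ (N * k)) i1 j * ‖v j‖ := h3
          _ ≤ ∑ j, (θ ^ k * h i1 / h j) * ‖v j‖ := h4
          _ = θ ^ k * C0 := h5
      rw [hC, div_mul_eq_mul_div, le_div_iff₀ hvi1]
      linarith
    have hfin : ‖μ‖ ^ N ≤ θ' := by
      refine ratio_le (pow_nonneg (norm_nonneg μ) N) hθ'0 (C := C) fun k => ?_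
      rw [← pow_mul]
      refine le_trans (hkey k) ?_
      exact mul_le_mul_of_nonneg_left (pow_le_pow_left₀ hθ0 hθθ' k) hC0'
    have hNne : N ≠ 0 := by omega
    rw [← hrN] at hfin
    exact (pow_le_pow_iff_left₀ (norm_nonneg μ) hr0 hNne).mp hfin
  have hrfl : specRad J = ⨆ μ ∈ spectrum ℂ (J.map Complex.ofReal), (‖μ‖₊ : ℝ≥0∞) := rfl
  rw [hrfl]
  refine lt_of_le_of_lt (iSup₂_le fun μ hμ => ?_) (ENNReal.ofReal_lt_one.mpr hr1)
  rw [← ENNReal.ofReal_coe_nnreal, coe_nnnorm]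
  exact ENNReal.ofReal_le_ofReal (habs μ hμ)

end stage6

/-- For an irreducible system, `0 ≤ Λ_H(a, Y(a)) < 1` for `0 < a < ρ`. -/
theorem statement14 (m : ℕ) (hm : 1 ≤ m) (S : PosSystem m) (sol : GFSol S)
    (hirr : sol.Irreducible) :
    ∀ a : ℝ, 0 < a → ENNReal.ofReal a < sol.rad →
      JacConvAt S (vec a (eval sol.y a)) ∧ lambda S (vec a (eval sol.y a)) < 1 := by
  intro a ha harad
  obtain ⟨b, hab, hbrad⟩ := exists_between_rad sol ha.le harad
  by_cases hconst : ∃ i : Fin m, ∀ n, 1 ≤ n → sol.y i n = 0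
  · obtain ⟨i, hi⟩ := hconst
    exact (const_contra hm sol hirr ha hab hbrad hi).elim
  by_cases hB : ∀ i d, S.c i d ≠ 0 → d 0 = 0 ∧ ∑ j : Fin m, d j.succ ≤ 1
  · exact (linear_contra hm sol hirr hB).elim
  push_neg at hconst hB
  obtain ⟨i0, dstar, hcstar, hdstar⟩ := hB
  have hdegstar : 1 ≤ dstar 0 ∨ 2 ≤ ∑ j : Fin m, dstar j.succ := by
    rcases Nat.eq_zero_or_pos (dstar 0) with h0 | h0
    · right
      have := hdstar h0
      omega
    · left; omega
  obtain ⟨hWF, hZF, hSC⟩ := hirr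
  have hb0 : (0:ℝ) < b := lt_trans ha hab
  set Ya : Fin m → ℝ := eval sol.y a with hYadef
  set Yb : Fin m → ℝ := eval sol.y b with hYbdef
  have hYapos : ∀ j, 0 < Ya j := fun j => eval_pos sol ha harad (hZF j).choose_spec
  have hYalt : ∀ j, Ya j < Yb j := by
    intro j
    obtain ⟨n, hn1, hn⟩ := hconst j
    exact eval_strict_mono sol ha.le hab hbrad hn1 hn
  have hxpos : ∀ k, 0 < vec a Ya k := vec_pos ha hYapos
  have hxlt : ∀ k, vec a Ya k < vec b Yb k := fun k => Fin.cases hab hYalt k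
  have hSA : ∀ i, Summable (fun d => term S i (vec a Ya) d) := fun i =>
    (sol.conv a ha.le harad i).of_abs
  have hSB : ∀ i, Summable (fun d => term S i (vec b Yb) d) := fun i =>
    (sol.conv b hb0.le hbrad i).of_abs
  set hv : Fin m → ℝ := fun j => Yb j - Ya j with hhv
  have hhpos : ∀ j, 0 < hv j := fun j => sub_pos.mpr (hYalt j)
  -- the fundamental per-term inequality
  have wk : ∀ (i : Fin m) (d : Fin (m + 1) → ℕ),
      term S i (vec a Ya) d + ∑ j, jacTerm S i j (vec a Ya) d * hv j
        ≤ term S i (vec b Yb) d := by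
    intro i d
    have := term_lb S i (fun k => (hxpos k).le) (fun k => (hxlt k).le) d
    simpa only [vec_succ] using this
  have wkstrict : term S i0 (vec a Ya) dstar
        + ∑ j, jacTerm S i0 j (vec a Ya) dstar * hv j
      < term S i0 (vec b Yb) dstar := by
    have := term_lb_strict S i0 hxpos hxlt hcstar hdegstar
    simpa only [vec_succ] using this
  -- summability of the Jacobian terms
  have SJ : ∀ i j, Summable (fun d => jacTerm S i j (vec a Ya) d) := by
    intro i j
    have hbound : ∀ d, jacTerm S i j (vec a Ya) d * hv j ≤ term S i (vec b Yb) d := by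
      intro d
      have h1 : jacTerm S i j (vec a Ya) d * hv j
          ≤ ∑ j', jacTerm S i j' (vec a Ya) d * hv j' := by
        refine Finset.single_le_sum (f := fun j' => jacTerm S i j' (vec a Ya) d * hv j')
          (fun j' _ => mul_nonneg (jacTerm_nonneg S i j' (fun k => (hxpos k).le) d)
            (hhpos j').le) (Finset.mem_univ j)
      have h2 := wk i d
      have h3 := term_nonneg S i (fun k => (hxpos k).le) d
      linarith
    refine Summable.of_nonneg_of_le
      (fun d => jacTerm_nonneg S i j (fun k => (hxpos k).le) d) (fun d => ?_)
      ((hSB i).mul_right (hv j)⁻¹)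
    rw [← div_eq_mul_inv, le_div_iff₀ (hhpos j)]
    exact hbound d
  have hJconv : JacConvAt S (vec a Ya) := fun i j => (SJ i j).abs
  set J : Matrix (Fin m) (Fin m) ℝ := jac S (vec a Ya) with hJdef
  have hJnn : ∀ i j, 0 ≤ J i j := fun i j =>
    jac_entry_nonneg S (fun k => (hxpos k).le) i j
  -- the subinvariance inequality
  have hsumJ : ∀ i, (∑ j, J i j * hv j)
      = ∑' d, ∑ j, jacTerm S i j (vec a Ya) d * hv j := by
    intro i
    calc ∑ j, J i j * hv j
        = ∑ j, (∑' d, jacTerm S i j (vec a Ya) d) * hv j := rfl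
      _ = ∑ j, ∑' d, jacTerm S i j (vec a Ya) d * hv j := by
          refine Finset.sum_congr rfl fun j _ => tsum_mul_right.symm
      _ = ∑' d, ∑ j, jacTerm S i j (vec a Ya) d * hv j :=
          (Summable.tsum_finsetSum fun j _ => (SJ i j).mul_right _).symm
  have hdiff : ∀ i, hv i
      = ∑' d, (term S i (vec b Yb) d - term S i (vec a Ya) d) := by
    intro i
    have ha' := congrFun (sol.fixed a ha.le harad) i
    have hb' := congrFun (sol.fixed b hb0.le hbrad) i
    rw [Hval] at ha' hb'
    rw [Summable.tsum_sub (hSB i) (hSA i), hhv]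
    simp only
    rw [← ha', ← hb']
  have hsub : ∀ i, (∑ j, J i j * hv j) ≤ hv i := by
    intro i
    rw [hsumJ i, hdiff i]
    refine Summable.tsum_le_tsum (fun d => ?_)
      (summable_sum fun j _ => (SJ i j).mul_right _) ((hSB i).sub (hSA i))
    have := wk i d
    linarith
  have hstrict : (∑ j, J i0 j * hv j) < hv i0 := by
    rw [hsumJ i0, hdiff i0]
    refine Summable.tsum_lt_tsum (i := dstar) (fun d => ?_) ?_
      (summable_sum fun j _ => (SJ i0 j).mul_right _) ((hSB i0).sub (hSA i0))
    · have := wk i0 d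
      linarith
    · have := wkstrict
      linarith
  -- positivity of Jacobian entries along dependencies, and reachability
  have hJdep : ∀ i j, DependsOn S i j → 0 < J i j := by
    intro i j hdep
    obtain ⟨d, hcd, hdj⟩ := dependsOn_witness hdep
    exact jac_entry_pos S (fun k => (hxpos k).le) (hJconv i j)
      (jacTerm_pos S i j hxpos hcd hdj)
  have hreach : ∀ i, ∃ k, 1 ≤ k ∧ 0 < (J ^ k) i i0 := by
    intro i
    obtain ⟨k, hk1, p, hp0, hpl, hstep⟩ := hSC i i0
    refine ⟨k, hk1, ?_⟩
    have := chain_pos hJnn k p (fun t => hJdep _ _ (hstep t))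
    rwa [hp0, hpl] at this
  obtain ⟨N, θ, hN1, hθ0, hθ1, hcontr⟩ :=
    contract_of_subinvariant hm hJnn hhpos hsub hstrict hreach
  exact ⟨hJconv, specRad_lt_one_of_contract hJnn hhpos hN1 hθ0 hθ1 hcontr⟩

end AnalyticComb
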